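/- arXiv:1803.07404 — 6 statements merged into one kernel-verified Lean document; each statement's English description precedes it below -/
import Mathlib

section
/- For the functions f₁(x,y) = x, f₂(x,y) = -xy, f₃(x,y) = c/(4x) + xy² on the right half-plane, the identity f₁·f₃ - f₂² = c/4 holds at every point; consequently, for two distinct values c ≠ c' there is no diffeomorphism of the half-plane intertwining the two triples of functions. -/
/-- `f₁ = x`, `f₂ = -xy`, `f₃ = c/(4x) + xy²` satisfy `f₁f₃ - f₂² = c/4` on the
right half-plane; consequently, for `c ≠ c'` no diffeomorphism of the half-plane
intertwines the two triples of functions. -/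
theorem sl2_casimir_value_and_nonequivalence :
    (∀ c : ℝ, ∀ p : ℝ × ℝ, 0 < p.1 →
      p.1 * (c / (4 * p.1) + p.1 * p.2 ^ 2) - (-(p.1 * p.2)) ^ 2 = c / 4) ∧
    (∀ c c' : ℝ, c ≠ c' →
      ¬ ∃ φ : ℝ × ℝ → ℝ × ℝ,
        (∀ p : ℝ × ℝ, 0 < p.1 → 0 < (φ p).1) ∧
        (∀ p : ℝ × ℝ, 0 < p.1 →
          (φ p).1 = p.1 ∧
          -((φ p).1 * (φ p).2) = -(p.1 * p.2) ∧
          c' / (4 * (φ p).1) + (φ p).1 * (φ p).2 ^ 2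
            = c / (4 * p.1) + p.1 * p.2 ^ 2)) := by
  constructor
  · intro c p hp
    field_simp
    ring
  · intro c c' hcc ⟨φ, _, h⟩
    obtain ⟨h1, h2, h3⟩ := h (1, 0) one_pos
    simp only [h1] at h2 h3
    simp at h2
    rw [h2] at h3
    norm_num at h3
    exact hcc (by linarith)
end

section
/- On the region {(x,y) : x > y}, the functions h₁ = 1/(x-y), h₂ = (x+y)/(2(x-y)), h₃ = xy/(x-y) satisfy, with respect to the Poisson bracket induced by the symplectic form ω = (dx∧dy)/(x-y)², the relations {h₁,h₂}_ω = -h₁, {h₁,h₃}_ω = -2h₂, {h₂,h₃}_ω = -h₃, and h₁h₃ - h₂² = -1/4. -/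
noncomputable def px (f : ℝ × ℝ → ℝ) (p : ℝ × ℝ) : ℝ := deriv (fun x => f (x, p.2)) p.1
noncomputable def py (f : ℝ × ℝ → ℝ) (p : ℝ × ℝ) : ℝ := deriv (fun y => f (p.1, y)) p.2

/-- The Poisson bracket induced by `ω = (x-y)⁻² dx∧dy` on `{x > y}`:
`{f,g}_ω = (x-y)²(∂ₓf ∂_y g - ∂_y f ∂ₓ g)`. -/
noncomputable def pbI4 (f g : ℝ × ℝ → ℝ) (p : ℝ × ℝ) : ℝ :=
  (p.1 - p.2) ^ 2 * (px f p * py g p - py f p * px g p)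

section aux

variable {p : ℝ × ℝ}

lemma px_h1 (h : p.1 - p.2 ≠ 0) : px (fun q => 1 / (q.1 - q.2)) p
    = (0 * (p.1 - p.2) - 1 * 1) / (p.1 - p.2) ^ 2 :=
  ((hasDerivAt_const p.1 (1:ℝ)).div ((hasDerivAt_id p.1).sub_const p.2) h).deriv

lemma py_h1 (h : p.1 - p.2 ≠ 0) : py (fun q => 1 / (q.1 - q.2)) p
    = (0 * (p.1 - p.2) - 1 * (0 - 1)) / (p.1 - p.2) ^ 2 :=
  ((hasDerivAt_const p.2 (1:ℝ)).div
    ((hasDerivAt_const p.2 p.1).sub (hasDerivAt_id p.2)) h).deriv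

lemma px_h2 (h : p.1 - p.2 ≠ 0) : px (fun q => (q.1 + q.2) / (2 * (q.1 - q.2))) p
    = (1 * (2 * (p.1 - p.2)) - (p.1 + p.2) * (2 * 1)) / (2 * (p.1 - p.2)) ^ 2 :=
  (((hasDerivAt_id p.1).add_const p.2).div
    (((hasDerivAt_id p.1).sub_const p.2).const_mul 2)
    (by simpa using h)).deriv

lemma py_h2 (h : p.1 - p.2 ≠ 0) : py (fun q => (q.1 + q.2) / (2 * (q.1 - q.2))) p
    = (1 * (2 * (p.1 - p.2)) - (p.1 + p.2) * (2 * (0 - 1))) / (2 * (p.1 - p.2)) ^ 2 :=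
  (((hasDerivAt_id p.2).const_add p.1).div
    (((hasDerivAt_const p.2 p.1).sub (hasDerivAt_id p.2)).const_mul 2)
    (by simpa using h)).deriv

lemma px_h3 (h : p.1 - p.2 ≠ 0) : px (fun q => q.1 * q.2 / (q.1 - q.2)) p
    = (1 * p.2 * (p.1 - p.2) - p.1 * p.2 * 1) / (p.1 - p.2) ^ 2 :=
  (((hasDerivAt_id p.1).mul_const p.2).div
    ((hasDerivAt_id p.1).sub_const p.2) h).deriv

lemma py_h3 (h : p.1 - p.2 ≠ 0) : py (fun q => q.1 * q.2 / (q.1 - q.2)) p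
    = (p.1 * 1 * (p.1 - p.2) - p.1 * p.2 * (0 - 1)) / (p.1 - p.2) ^ 2 :=
  (((hasDerivAt_id p.2).const_mul p.1).div
    ((hasDerivAt_const p.2 p.1).sub (hasDerivAt_id p.2)) h).deriv

end aux

/-- Class I₄: `h₁ = 1/(x-y)`, `h₂ = (x+y)/(2(x-y))`, `h₃ = xy/(x-y)` close
`sl(2)` under `{·,·}_ω` and satisfy `h₁h₃ - h₂² = -1/4`. -/
theorem sl2_classI4 :
    ∀ p : ℝ × ℝ, p.2 < p.1 →
      pbI4 (fun q => 1 / (q.1 - q.2)) (fun q => (q.1 + q.2) / (2 * (q.1 - q.2))) p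
        = -(1 / (p.1 - p.2)) ∧
      pbI4 (fun q => 1 / (q.1 - q.2)) (fun q => q.1 * q.2 / (q.1 - q.2)) p
        = -2 * ((p.1 + p.2) / (2 * (p.1 - p.2))) ∧
      pbI4 (fun q => (q.1 + q.2) / (2 * (q.1 - q.2))) (fun q => q.1 * q.2 / (q.1 - q.2)) p
        = -(p.1 * p.2 / (p.1 - p.2)) ∧
      (1 / (p.1 - p.2)) * (p.1 * p.2 / (p.1 - p.2))
        - ((p.1 + p.2) / (2 * (p.1 - p.2))) ^ 2 = -(1 / 4) := by
  intro p hp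
  have h : p.1 - p.2 ≠ 0 := sub_ne_zero.mpr (ne_of_gt hp)
  refine ⟨?_, ?_, ?_, ?_⟩
  · simp only [pbI4, px_h1 h, py_h1 h, px_h2 h, py_h2 h]; field_simp; ring
  · simp only [pbI4, px_h1 h, py_h1 h, px_h3 h, py_h3 h]; field_simp; ring
  · simp only [pbI4, px_h2 h, py_h2 h, px_h3 h, py_h3 h]; field_simp; ring
  · field_simp; ring
end

section
/- The function F⁽²⁾(x₁,y₁,x₂,y₂) = ((x₁-x₂)² + (y₁+y₂)²)/(y₁y₂) on the product of two copies of the upper half-plane is annihilated by the diagonal prolongations of the vector fields X₁ = ∂/∂x, X₂ = x∂/∂x + y∂/∂y, X₃ = (x²-y²)∂/∂x + 2xy∂/∂y; that is, (X_i(x₁,y₁) + X_i(x₂,y₂))F⁽²⁾ = 0 for i = 1,2,3. -/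
/-- Action of the diagonal prolongation of a vector field `X = a∂ₓ + b∂_y` on `ℝ²`
(encoded as `X : ℝ × ℝ → ℝ × ℝ`) on a function `F(x₁,y₁,x₂,y₂)` on `(ℝ²)²`. -/
noncomputable def prolong (X : ℝ × ℝ → ℝ × ℝ) (F : ℝ → ℝ → ℝ → ℝ → ℝ)
    (x₁ y₁ x₂ y₂ : ℝ) : ℝ :=
  (X (x₁, y₁)).1 * deriv (fun t => F t y₁ x₂ y₂) x₁
    + (X (x₁, y₁)).2 * deriv (fun t => F x₁ t x₂ y₂) y₁
    + (X (x₂, y₂)).1 * deriv (fun t => F x₁ y₁ t y₂) x₂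
    + (X (x₂, y₂)).2 * deriv (fun t => F x₁ y₁ x₂ t) y₂

/-! `F⁽²⁾ = 2 cosh d + 2`, where `d` is the hyperbolic distance between `x₁ + i y₁` and
`x₂ + i y₂`, and the `Xᵢ` generate the Möbius isometries of the upper half-plane; this is why
`F⁽²⁾` is annihilated. The proof is nonetheless a direct computation: with the partial
derivatives of `F⁽²⁾` in closed form, each identity is an identity of rational functions. -/

theorem prolong_eq_of_hasDerivAt (X : ℝ × ℝ → ℝ × ℝ) (F : ℝ → ℝ → ℝ → ℝ → ℝ)
    {x₁ y₁ x₂ y₂ p₁ q₁ p₂ q₂ : ℝ}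
    (hp₁ : HasDerivAt (fun t => F t y₁ x₂ y₂) p₁ x₁)
    (hq₁ : HasDerivAt (fun t => F x₁ t x₂ y₂) q₁ y₁)
    (hp₂ : HasDerivAt (fun t => F x₁ y₁ t y₂) p₂ x₂)
    (hq₂ : HasDerivAt (fun t => F x₁ y₁ x₂ t) q₂ y₂) :
    prolong X F x₁ y₁ x₂ y₂ =
      (X (x₁, y₁)).1 * p₁ + (X (x₁, y₁)).2 * q₁ + (X (x₂, y₂)).1 * p₂ + (X (x₂, y₂)).2 * q₂ := by
  rw [prolong, hp₁.deriv, hq₁.deriv, hp₂.deriv, hq₂.deriv]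

namespace ClassP2

noncomputable def invariant (a b c d : ℝ) : ℝ := ((a - c) ^ 2 + (b + d) ^ 2) / (b * d)

theorem invariant_swap (a b c d : ℝ) : invariant a b c d = invariant c d a b := by
  unfold invariant; ring

theorem hasDerivAt_invariant_x₁ (a b c d : ℝ) :
    HasDerivAt (fun t => invariant t b c d) (2 * (a - c) / (b * d)) a := by
  unfold invariant
  refine (((((hasDerivAt_id' a).sub_const c).fun_pow 2).add_const _).div_const _).congr_deriv ?_
  ring

theorem hasDerivAt_invariant_y₁ (a c : ℝ) {b d : ℝ} (hb : b ≠ 0) (hd : d ≠ 0) :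
    HasDerivAt (fun t => invariant a t c d) ((b ^ 2 - d ^ 2 - (a - c) ^ 2) / (b ^ 2 * d)) b := by
  unfold invariant
  have hnum := (((hasDerivAt_id' b).add_const d).fun_pow 2).const_add ((a - c) ^ 2)
  have hden := (hasDerivAt_id' b).mul_const d
  refine (hnum.div hden (mul_ne_zero hb hd)).congr_deriv ?_
  field_simp
  ring

theorem hasDerivAt_invariant_x₂ (a b c d : ℝ) :
    HasDerivAt (fun t => invariant a b t d) (2 * (c - a) / (b * d)) c := by
  simp only [invariant_swap a b]
  convert hasDerivAt_invariant_x₁ c d a b using 2; ring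

theorem hasDerivAt_invariant_y₂ (a c : ℝ) {b d : ℝ} (hb : b ≠ 0) (hd : d ≠ 0) :
    HasDerivAt (fun t => invariant a b c t) ((d ^ 2 - b ^ 2 - (c - a) ^ 2) / (d ^ 2 * b)) d := by
  simp only [invariant_swap a b]
  exact hasDerivAt_invariant_y₁ c a hd hb

theorem prolong_invariant (X : ℝ × ℝ → ℝ × ℝ) {x₁ y₁ x₂ y₂ : ℝ} (hy₁ : y₁ ≠ 0) (hy₂ : y₂ ≠ 0) :
    prolong X invariant x₁ y₁ x₂ y₂ =
      (X (x₁, y₁)).1 * (2 * (x₁ - x₂) / (y₁ * y₂))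
        + (X (x₁, y₁)).2 * ((y₁ ^ 2 - y₂ ^ 2 - (x₁ - x₂) ^ 2) / (y₁ ^ 2 * y₂))
        + (X (x₂, y₂)).1 * (2 * (x₂ - x₁) / (y₁ * y₂))
        + (X (x₂, y₂)).2 * ((y₂ ^ 2 - y₁ ^ 2 - (x₂ - x₁) ^ 2) / (y₂ ^ 2 * y₁)) :=
  prolong_eq_of_hasDerivAt X invariant (hasDerivAt_invariant_x₁ _ _ _ _)
    (hasDerivAt_invariant_y₁ _ _ hy₁ hy₂) (hasDerivAt_invariant_x₂ _ _ _ _)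
    (hasDerivAt_invariant_y₂ _ _ hy₁ hy₂)

end ClassP2

/-- The constant of motion `F⁽²⁾ = ((x₁-x₂)² + (y₁+y₂)²)/(y₁y₂)` of class P₂ is
annihilated by the diagonal prolongations of `X₁ = ∂ₓ`, `X₂ = x∂ₓ + y∂_y`,
`X₃ = (x²-y²)∂ₓ + 2xy∂_y`. -/
theorem sl2_classP2_constant_of_motion :
    ∀ x₁ y₁ x₂ y₂ : ℝ, 0 < y₁ → 0 < y₂ →
      prolong (fun _ => (1, 0))
        (fun a b c d => ((a - c) ^ 2 + (b + d) ^ 2) / (b * d)) x₁ y₁ x₂ y₂ = 0 ∧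
      prolong (fun q => (q.1, q.2))
        (fun a b c d => ((a - c) ^ 2 + (b + d) ^ 2) / (b * d)) x₁ y₁ x₂ y₂ = 0 ∧
      prolong (fun q => (q.1 ^ 2 - q.2 ^ 2, 2 * q.1 * q.2))
        (fun a b c d => ((a - c) ^ 2 + (b + d) ^ 2) / (b * d)) x₁ y₁ x₂ y₂ = 0 := by
  intro x₁ y₁ x₂ y₂ hy₁ hy₂
  refine ⟨?_, ?_, ?_⟩ <;>
  · change prolong _ ClassP2.invariant x₁ y₁ x₂ y₂ = 0
    rw [ClassP2.prolong_invariant _ hy₁.ne' hy₂.ne']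
    field_simp
    ring
end

section
/- The function F⁽²⁾(x₁,y₁,x₂,y₂) = (x₁-x₂)²/(4y₁²y₂²) on the product of two copies of the upper half-plane is annihilated by the diagonal prolongations of X₁ = ∂/∂x, X₂ = x∂/∂x + (y/2)∂/∂y, X₃ = x²∂/∂x + xy∂/∂y. -/
/-!
Write `X(xᵢ, yᵢ) = (aᵢ, bᵢ)`. Since `∂F⁽²⁾/∂x₁ = -∂F⁽²⁾/∂x₂ = 2(x₁ - x₂)/(4y₁²y₂²)` and
`∂F⁽²⁾/∂yᵢ = -2F⁽²⁾/yᵢ`, the prolongation of `X` applied to `F⁽²⁾` is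
`(x₁ - x₂)/(2y₁²y₂²) · (a₁ - a₂ - (x₁ - x₂)(b₁/y₁ + b₂/y₂))`.
The bracket vanishes identically for the three generators: `b/y` is `0`, `1/2`, `x`
while `a` is `1`, `x`, `x²`.
-/

noncomputable def classI5Invariant (x₁ y₁ x₂ y₂ : ℝ) : ℝ :=
  (x₁ - x₂) ^ 2 / (4 * y₁ ^ 2 * y₂ ^ 2)

lemma hasDerivAt_sub_sq_div (c K x : ℝ) :
    HasDerivAt (fun t => (t - c) ^ 2 / K) (2 * (x - c) / K) x := by
  simpa using (((hasDerivAt_id x).sub_const c).fun_pow 2).div_const K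

lemma hasDerivAt_div_sq (K y : ℝ) (hy : y ≠ 0) :
    HasDerivAt (fun t => K / t ^ 2) (-2 * (K / y ^ 2) / y) y := by
  simp only [div_eq_mul_inv K]
  refine (((hasDerivAt_pow 2 y).inv (pow_ne_zero 2 hy)).const_mul K).congr_deriv ?_
  field_simp
  ring

section

variable {x₁ y₁ x₂ y₂ : ℝ}

lemma hasDerivAt_classI5Invariant_x₁ :
    HasDerivAt (fun t => classI5Invariant t y₁ x₂ y₂)
      (2 * (x₁ - x₂) / (4 * y₁ ^ 2 * y₂ ^ 2)) x₁ :=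
  hasDerivAt_sub_sq_div _ _ _

lemma hasDerivAt_classI5Invariant_x₂ :
    HasDerivAt (fun t => classI5Invariant x₁ y₁ t y₂)
      (-(2 * (x₁ - x₂) / (4 * y₁ ^ 2 * y₂ ^ 2))) x₂ := by
  have h := hasDerivAt_sub_sq_div x₁ (4 * y₁ ^ 2 * y₂ ^ 2) x₂
  simp only [sub_sq_comm _ x₁] at h
  exact h.congr_deriv (by ring)

lemma hasDerivAt_classI5Invariant_y₁ (hy₁ : y₁ ≠ 0) :
    HasDerivAt (fun t => classI5Invariant x₁ t x₂ y₂)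
      (-2 * classI5Invariant x₁ y₁ x₂ y₂ / y₁) y₁ := by
  have h := hasDerivAt_div_sq ((x₁ - x₂) ^ 2 / (4 * y₂ ^ 2)) y₁ hy₁
  simp only [div_div, mul_right_comm _ (y₂ ^ 2)] at h
  exact h

lemma hasDerivAt_classI5Invariant_y₂ (hy₂ : y₂ ≠ 0) :
    HasDerivAt (fun t => classI5Invariant x₁ y₁ x₂ t)
      (-2 * classI5Invariant x₁ y₁ x₂ y₂ / y₂) y₂ := by
  have h := hasDerivAt_div_sq ((x₁ - x₂) ^ 2 / (4 * y₁ ^ 2)) y₂ hy₂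
  simp only [div_div] at h
  exact h

lemma prolong_classI5Invariant (X : ℝ × ℝ → ℝ × ℝ) (hy₁ : y₁ ≠ 0) (hy₂ : y₂ ≠ 0) :
    prolong X classI5Invariant x₁ y₁ x₂ y₂
      = (x₁ - x₂) / (2 * y₁ ^ 2 * y₂ ^ 2) * ((X (x₁, y₁)).1 - (X (x₂, y₂)).1
          - (x₁ - x₂) * ((X (x₁, y₁)).2 / y₁ + (X (x₂, y₂)).2 / y₂)) := by
  rw [prolong, hasDerivAt_classI5Invariant_x₁.deriv, hasDerivAt_classI5Invariant_x₂.deriv,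
    (hasDerivAt_classI5Invariant_y₁ hy₁).deriv, (hasDerivAt_classI5Invariant_y₂ hy₂).deriv,
    classI5Invariant]
  field_simp
  ring

lemma prolong_classI5Invariant_eq_zero (X : ℝ × ℝ → ℝ × ℝ) (hy₁ : y₁ ≠ 0) (hy₂ : y₂ ≠ 0)
    (hX : (X (x₁, y₁)).1 - (X (x₂, y₂)).1
      = (x₁ - x₂) * ((X (x₁, y₁)).2 / y₁ + (X (x₂, y₂)).2 / y₂)) :
    prolong X classI5Invariant x₁ y₁ x₂ y₂ = 0 := by
  rw [prolong_classI5Invariant X hy₁ hy₂, hX, sub_self, mul_zero]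

end

/-- The constant of motion `F⁽²⁾ = (x₁-x₂)²/(4y₁²y₂²)` of class I₅ is annihilated
by the diagonal prolongations of `X₁ = ∂ₓ`, `X₂ = x∂ₓ + (y/2)∂_y`,
`X₃ = x²∂ₓ + xy∂_y` on the product of two upper half-planes. -/
theorem sl2_classI5_constant_of_motion :
    ∀ x₁ y₁ x₂ y₂ : ℝ, 0 < y₁ → 0 < y₂ →
      prolong (fun _ => (1, 0))
        (fun a b c d => (a - c) ^ 2 / (4 * b ^ 2 * d ^ 2)) x₁ y₁ x₂ y₂ = 0 ∧
      prolong (fun q => (q.1, q.2 / 2))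
        (fun a b c d => (a - c) ^ 2 / (4 * b ^ 2 * d ^ 2)) x₁ y₁ x₂ y₂ = 0 ∧
      prolong (fun q => (q.1 ^ 2, q.1 * q.2))
        (fun a b c d => (a - c) ^ 2 / (4 * b ^ 2 * d ^ 2)) x₁ y₁ x₂ y₂ = 0 := by
  intro x₁ y₁ x₂ y₂ h₁ h₂
  have hy₁ : y₁ ≠ 0 := h₁.ne'
  have hy₂ : y₂ ≠ 0 := h₂.ne'
  refine ⟨?_, ?_, ?_⟩
  · exact prolong_classI5Invariant_eq_zero _ hy₁ hy₂ (by simp)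
  · exact prolong_classI5Invariant_eq_zero _ hy₁ hy₂ (by field_simp; ring)
  · exact prolong_classI5Invariant_eq_zero _ hy₁ hy₂ (by field_simp; ring)
end

section
/- The function C_z = shc(2z v₁)·v₁v₃ - v₂² Poisson-commutes with v₁, v₂, v₃ with respect to the deformed bracket {v₁,v₂}_z = -shc(2z v₁)v₁, {v₁,v₃}_z = -2v₂, {v₂,v₃}_z = -cosh(2z v₁)v₃ on ℝ³; that is, {C_z, v_i}_z = 0 for i = 1,2,3. -/
/-!
Since `shc (2 z v₁) v₁ = sinh (2 z v₁) / (2 z)` (and `= v₁` when `z = 0`), its derivative is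
`cosh (2 z v₁)`. The gradient of `C_z` is therefore `(cosh (2 z v₁) v₃, -2 v₂, shc (2 z v₁) v₁)`,
and each bracket `{C_z, vᵢ}_z` collapses to a ring identity in these quantities.
-/

/-- The cardinal hyperbolic sine function. -/
noncomputable def shc (ξ : ℝ) : ℝ := if ξ = 0 then 1 else Real.sinh ξ / ξ

noncomputable def d1 (f : ℝ × ℝ × ℝ → ℝ) (p : ℝ × ℝ × ℝ) : ℝ :=
  deriv (fun t => f (t, p.2.1, p.2.2)) p.1
noncomputable def d2 (f : ℝ × ℝ × ℝ → ℝ) (p : ℝ × ℝ × ℝ) : ℝ :=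
  deriv (fun t => f (p.1, t, p.2.2)) p.2.1
noncomputable def d3 (f : ℝ × ℝ × ℝ → ℝ) (p : ℝ × ℝ × ℝ) : ℝ :=
  deriv (fun t => f (p.1, p.2.1, t)) p.2.2

/-- The deformed Poisson bracket `{·,·}_z` on `ℝ³` determined on coordinates by
`{v₁,v₂}_z = -shc(2zv₁)v₁`, `{v₁,v₃}_z = -2v₂`, `{v₂,v₃}_z = -cosh(2zv₁)v₃`. -/
noncomputable def lpbz (z : ℝ) (f g : ℝ × ℝ × ℝ → ℝ) (p : ℝ × ℝ × ℝ) : ℝ :=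
  (-(shc (2 * z * p.1) * p.1)) * (d1 f p * d2 g p - d2 f p * d1 g p)
    + (-2 * p.2.1) * (d1 f p * d3 g p - d3 f p * d1 g p)
    + (-(Real.cosh (2 * z * p.1) * p.2.2)) * (d2 f p * d3 g p - d3 f p * d2 g p)

open Real

lemma shc_mul_self_of_ne_zero {a : ℝ} (ha : a ≠ 0) (s : ℝ) :
    shc (a * s) * s = sinh (a * s) / a := by
  rcases eq_or_ne s 0 with rfl | hs
  · simp
  · rw [shc, if_neg (mul_ne_zero ha hs)]
    field_simp

lemma hasDerivAt_shc_mul_self (a t : ℝ) :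
    HasDerivAt (fun s => shc (a * s) * s) (cosh (a * t)) t := by
  rcases eq_or_ne a 0 with rfl | ha
  · simpa [shc] using hasDerivAt_id' t
  · simp only [shc_mul_self_of_ne_zero ha]
    have h := ((hasDerivAt_id t).const_mul a).sinh.div_const a
    rwa [mul_one, mul_div_cancel_right₀ _ ha] at h

noncomputable def casimir (z : ℝ) (v : ℝ × ℝ × ℝ) : ℝ :=
  shc (2 * z * v.1) * v.1 * v.2.2 - v.2.1 ^ 2

section casimir

variable (z : ℝ) (p : ℝ × ℝ × ℝ)

lemma d1_casimir : d1 (casimir z) p = cosh (2 * z * p.1) * p.2.2 :=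
  (((hasDerivAt_shc_mul_self (2 * z) p.1).mul_const p.2.2).sub_const (p.2.1 ^ 2)).deriv

lemma d2_casimir : d2 (casimir z) p = -(2 * p.2.1) := by
  have h := (hasDerivAt_pow 2 p.2.1).const_sub (shc (2 * z * p.1) * p.1 * p.2.2)
  simp only [d2, casimir]
  rw [h.deriv]
  ring

lemma d3_casimir : d3 (casimir z) p = shc (2 * z * p.1) * p.1 := by
  have h := ((hasDerivAt_id' p.2.2).const_mul (shc (2 * z * p.1) * p.1)).sub_const (p.2.1 ^ 2)
  simp only [d3, casimir]
  rw [h.deriv, mul_one]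

end casimir

/-- The deformed Casimir `C_z = shc(2zv₁)v₁v₃ - v₂²` Poisson-commutes with
`v₁, v₂, v₃` relative to the deformed bracket `{·,·}_z`. -/
theorem sl2_deformed_casimir (z : ℝ) :
    ∀ p : ℝ × ℝ × ℝ,
      lpbz z (fun v => shc (2 * z * v.1) * v.1 * v.2.2 - v.2.1 ^ 2) (fun v => v.1) p = 0 ∧
      lpbz z (fun v => shc (2 * z * v.1) * v.1 * v.2.2 - v.2.1 ^ 2) (fun v => v.2.1) p = 0 ∧
      lpbz z (fun v => shc (2 * z * v.1) * v.1 * v.2.2 - v.2.1 ^ 2) (fun v => v.2.2) p = 0 := by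
  intro p
  change lpbz z (casimir z) _ p = 0 ∧ lpbz z (casimir z) _ p = 0 ∧ lpbz z (casimir z) _ p = 0
  simp only [lpbz, d1_casimir, d2_casimir, d3_casimir]
  simp only [d1, d2, d3, deriv_id'', deriv_const]
  refine ⟨?_, ?_, ?_⟩ <;> ring
end

section
/- For the class I₅ deformation on the upper half-plane, the deformed vector fields X_{z,1} = ∂/∂x, X_{z,2} = x·cosh(z/y²)∂/∂x + (y/2)·shc(z/y²)∂/∂y, X_{z,3} = x²·cosh(z/y²)∂/∂x + xy·shc(z/y²)∂/∂y are the Hamiltonian vector fields (relative to ω = y^{-3}dx∧dy) of the deformed Hamiltonians h_{z,1} = -1/(2y²), h_{z,2} = -(x/(2y²))·shc(z/y²), h_{z,3} = -(x²/(2y²))·shc(z/y²); that is, ι_{X_{z,i}}ω = dh_{z,i} for i = 1,2,3. -/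
/-!
The Hamiltonians depend on `y` only through `u = y⁻²`, as `-(c/2) · u · shc (z u)`. The
singularity of `shc` is removable: `u · shc (z u)` equals `sinh (z u) / z` for `z ≠ 0` and `u`
for `z = 0`, so its `u`-derivative is `cosh (z u)` in every case. The chain rule with
`du/dy = -2/y³` then gives `∂_y h = c cosh (z/y²) / y³`; the `x`-derivatives are polynomial.
-/

theorem mul_shc_mul_eq (z u : ℝ) (hz : z ≠ 0) : u * shc (z * u) = Real.sinh (z * u) / z := by
  by_cases hu : u = 0
  · simp [hu]
  · rw [shc, if_neg (mul_ne_zero hz hu)]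
    field_simp

theorem hasDerivAt_mul_shc_mul (z u : ℝ) :
    HasDerivAt (fun u => u * shc (z * u)) (Real.cosh (z * u)) u := by
  rcases eq_or_ne z 0 with rfl | hz
  · simpa [shc] using hasDerivAt_id' u
  · have h := ((hasDerivAt_id' u).const_mul z).sinh.div_const z
    rw [mul_one, mul_div_cancel_right₀ _ hz] at h
    simpa only [mul_shc_mul_eq z _ hz] using h

theorem hasDerivAt_inv_sq {y : ℝ} (hy : y ≠ 0) :
    HasDerivAt (fun y => (y ^ 2)⁻¹) (-2 / y ^ 3) y := by
  refine ((hasDerivAt_pow 2 y).inv (pow_ne_zero 2 hy)).congr_deriv ?_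
  field_simp
  ring

theorem deriv_neg_div_two_sq_mul_shc (z c : ℝ) {y : ℝ} (hy : y ≠ 0) :
    deriv (fun y' => -(c / (2 * y' ^ 2)) * shc (z / y' ^ 2)) y
      = c * Real.cosh (z / y ^ 2) / y ^ 3 := by
  have hf : (fun y' => -(c / (2 * y' ^ 2)) * shc (z / y' ^ 2))
      = fun y' => -(c / 2) * ((y' ^ 2)⁻¹ * shc (z * (y' ^ 2)⁻¹)) := by
    funext y'
    simp only [div_eq_mul_inv, mul_inv]
    ring
  have h : HasDerivAt (fun y' => -(c / 2) * ((y' ^ 2)⁻¹ * shc (z * (y' ^ 2)⁻¹)))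
      (-(c / 2) * (Real.cosh (z * (y ^ 2)⁻¹) * (-2 / y ^ 3))) y :=
    ((hasDerivAt_mul_shc_mul z _).comp y (hasDerivAt_inv_sq hy)).const_mul _
  rw [hf, h.deriv, ← div_eq_mul_inv]
  field_simp

/-- For `ω = y⁻³ dx∧dy` on `{y > 0}` and a vector field `X = a∂ₓ + b∂_y`, the
condition `ι_X ω = dh` reads `∂ₓh = -b/y³` and `∂_y h = a/y³`. -/
theorem sl2_classI5_deformed_hamiltonian_vector_fields (z : ℝ) :
    ∀ x y : ℝ, 0 < y →
      -- X_{z,1} = ∂ₓ and h_{z,1} = -1/(2y²)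
      (deriv (fun x' => -(1 / (2 * y ^ 2))) x = -(0 : ℝ) / y ^ 3 ∧
       deriv (fun y' : ℝ => -(1 / (2 * y' ^ 2))) y = 1 / y ^ 3) ∧
      -- X_{z,2} = x cosh(z/y²)∂ₓ + (y/2) shc(z/y²)∂_y,  h_{z,2} = -(x/(2y²)) shc(z/y²)
      (deriv (fun x' => -(x' / (2 * y ^ 2)) * shc (z / y ^ 2)) x
         = -(y / 2 * shc (z / y ^ 2)) / y ^ 3 ∧
       deriv (fun y' => -(x / (2 * y' ^ 2)) * shc (z / y' ^ 2)) y
         = x * Real.cosh (z / y ^ 2) / y ^ 3) ∧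
      -- X_{z,3} = x² cosh(z/y²)∂ₓ + x y shc(z/y²)∂_y,  h_{z,3} = -(x²/(2y²)) shc(z/y²)
      (deriv (fun x' => -(x' ^ 2 / (2 * y ^ 2)) * shc (z / y ^ 2)) x
         = -(x * y * shc (z / y ^ 2)) / y ^ 3 ∧
       deriv (fun y' => -(x ^ 2 / (2 * y' ^ 2)) * shc (z / y' ^ 2)) y
         = x ^ 2 * Real.cosh (z / y ^ 2) / y ^ 3) := by
  intro x y hy
  have hy0 : y ≠ 0 := hy.ne'
  refine ⟨⟨by simp, ?_⟩, ⟨?_, deriv_neg_div_two_sq_mul_shc z x hy0⟩,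
    ⟨?_, deriv_neg_div_two_sq_mul_shc z (x ^ 2) hy0⟩⟩
  · simpa [shc] using deriv_neg_div_two_sq_mul_shc 0 1 hy0
  · exact (((hasDerivAt_id' x).div_const _).neg.mul_const _).deriv.trans (by field_simp)
  · exact (((hasDerivAt_pow 2 x).div_const _).neg.mul_const _).deriv.trans
      (by field_simp; ring)
end
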